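/- Every Borel probability measure P on ℝ with P([0,∞)) = 1 whose CDF F_P(x) = P((−∞, x]) is concave on [0,∞) satisfies P((a,b]) ≤ (b − a)/b for all real 0 ≤ a < b; that is, 𝒰₀⁺ ⊆ 𝒱. -/

import Mathlib

open MeasureTheory Set

/-- `𝒰₀⁺`: Borel probability measures on `ℝ` concentrated on `[0,∞)` whose CDF is concave
on `[0,∞)`. -/
def U0plus : Set (Measure ℝ) :=
  {P | IsProbabilityMeasure P ∧ P (Ici (0 : ℝ)) = 1 ∧
    ConcaveOn ℝ (Ici (0 : ℝ)) (fun x => (P (Iic x)).toReal)}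

/-- `𝒱`: Borel probability measures on `ℝ` concentrated on `[0,∞)` satisfying the basic
inequality `P((a,b]) ≤ (b−a)/b` for all `0 ≤ a < b`. -/
def Vclass : Set (Measure ℝ) :=
  {P | IsProbabilityMeasure P ∧ P (Ici (0 : ℝ)) = 1 ∧
    ∀ a b : ℝ, 0 ≤ a → a < b → P (Ioc a b) ≤ ENNReal.ofReal ((b - a) / b)}

/-! The CDF `F` is concave on `[0, ∞)`, so its average slope over `[a, b]` is at most its
average slope over `[0, b]`; hence `F b - F a ≤ (b - a) / b * (F b - F 0) ≤ (b - a) / b`,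
because `0 ≤ F ≤ 1`. -/

theorem ConcaveOn.mul_sub_le_mul_sub {s : Set ℝ} {f : ℝ → ℝ} (hf : ConcaveOn ℝ s f)
    {x a b : ℝ} (hx : x ∈ s) (hb : b ∈ s) (hxa : x ≤ a) (hab : a ≤ b) :
    (b - x) * (f b - f a) ≤ (b - a) * (f b - f x) := by
  rcases hxa.eq_or_lt with rfl | hxa
  · exact le_rfl
  rcases hab.eq_or_lt with rfl | hab
  · simp
  have h := hf.neg.secant_mono_aux1 hx hb hxa hab
  simp only [Pi.neg_apply] at h
  linarith

theorem measureReal_Ioc_eq_sub {μ : Measure ℝ} [IsFiniteMeasure μ] {a b : ℝ} (hab : a ≤ b) :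
    μ.real (Ioc a b) = μ.real (Iic b) - μ.real (Iic a) := by
  rw [← Iic_sdiff_Iic, measureReal_sdiff (Iic_subset_Iic.2 hab) measurableSet_Iic]

theorem measureReal_Ioc_le_of_concaveOn_cdf {P : Measure ℝ} [IsProbabilityMeasure P]
    (hF : ConcaveOn ℝ (Ici 0) (fun x => P.real (Iic x))) {a b : ℝ} (ha : 0 ≤ a) (hab : a < b) :
    P.real (Ioc a b) ≤ (b - a) / b := by
  have hb : 0 < b := ha.trans_lt hab
  rw [measureReal_Ioc_eq_sub hab.le, le_div_iff₀ hb, mul_comm]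
  calc b * (P.real (Iic b) - P.real (Iic a))
      = (b - 0) * (P.real (Iic b) - P.real (Iic a)) := by rw [sub_zero]
    _ ≤ (b - a) * (P.real (Iic b) - P.real (Iic 0)) :=
        hF.mul_sub_le_mul_sub self_mem_Ici (mem_Ici.2 hb.le) ha hab.le
    _ ≤ (b - a) * 1 := by
        gcongr
        linarith [measureReal_le_one (μ := P) (s := Iic b),
          measureReal_nonneg (μ := P) (s := Iic 0)]
    _ = b - a := mul_one _

/-- **basic inequality for continuous monotone distributions.**
Every probability measure on `ℝ` concentrated on `[0,∞)` with concave CDF on `[0,∞)`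
satisfies `P((a,b]) ≤ (b−a)/b` for all `0 ≤ a < b`; i.e. `𝒰₀⁺ ⊆ 𝒱`. -/
theorem stmt15 : U0plus ⊆ Vclass := by
  rintro P ⟨hP, hIci, hF⟩
  refine ⟨hP, hIci, fun a b ha hab => ?_⟩
  rw [← ofReal_measureReal]
  exact ENNReal.ofReal_le_ofReal (measureReal_Ioc_le_of_concaveOn_cdf hF ha hab)
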